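/- arXiv:2603.29017 — 7 statements merged into one kernel-verified Lean document; each statement's English description precedes it below -/
import Mathlib

section
/- Let Θ : ℝ × (ℝ∖{0}) → ℝ be three times continuously differentiable. Then for all (s,z) with z ≠ 0 one has (1/z²)·Ψ(z²·Ψ(z²·Ψ(Θ/z²)))(s,z) = −2·Ψ(z²·Ψ(Θ/z²))(s,z) − (s/z)·Ψ(z²·Ψ(Θ_s/z))(s,z) − Ψ(z²·Ψ(Θ_z/z))(s,z). -/
/-- The operator `Ψ(Θ)(s,z) = -s·Θ_s(s,z) - z·Θ_z(s,z)`. -/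
noncomputable def Psi (Θ : ℝ → ℝ → ℝ) (s z : ℝ) : ℝ :=
  -s * deriv (fun s' => Θ s' z) s - z * deriv (fun z' => Θ s z') z

/-!
`Ψ` is the Euler operator `-(s ∂_s + z ∂_z)`, i.e. `Ψ f (x) = -Df(x) x`. It is a derivation with
`Ψ (z ^ m) = -m z ^ m`, so `z ^ n Ψ (f / z ^ n) = (Ψ + n) f` and `Ψ (z ^ n f) = z ^ n (Ψ - n) f`;
and, by the symmetry of second derivatives, `[Ψ, ∂] = ∂` for `∂ = ∂_s, ∂_z`.
With `A = (Ψ + 2) Θ` this gives `z² Ψ (Θ / z²) = A` and `z² Ψ (∂Θ / z) = z ∂A`, so the left-hand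
side is `(Ψ - 2) Ψ A`, while the right-hand side is `-2 Ψ A - s ∂_s Ψ A - z ∂_z Ψ A`.
-/

open Function Filter Topology

noncomputable def partialS (f : ℝ → ℝ → ℝ) (s z : ℝ) : ℝ := deriv (fun s' => f s' z) s

noncomputable def partialZ (f : ℝ → ℝ → ℝ) (s z : ℝ) : ℝ := deriv (fun z' => f s z') z

lemma Psi_eq_partial (f : ℝ → ℝ → ℝ) (s z : ℝ) :
    Psi f s z = -s * partialS f s z - z * partialZ f s z := rfl

section Congr

variable {U : Set (ℝ × ℝ)} {f g : ℝ → ℝ → ℝ} {s z : ℝ}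

lemma partialS_congr (hU : IsOpen U) (h : ∀ a b, (a, b) ∈ U → f a b = g a b) (hp : (s, z) ∈ U) :
    partialS f s z = partialS g s z := by
  have hline : IsOpen {x | (x, z) ∈ U} := hU.preimage (continuous_id.prodMk continuous_const)
  exact EventuallyEq.deriv_eq (eventually_of_mem (hline.mem_nhds hp) fun x hx => h x z hx)

lemma partialZ_congr (hU : IsOpen U) (h : ∀ a b, (a, b) ∈ U → f a b = g a b) (hp : (s, z) ∈ U) :
    partialZ f s z = partialZ g s z := by
  have hline : IsOpen {y | (s, y) ∈ U} := hU.preimage (continuous_const.prodMk continuous_id)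
  exact EventuallyEq.deriv_eq (eventually_of_mem (hline.mem_nhds hp) fun y hy => h s y hy)

lemma Psi_congr (hU : IsOpen U) (h : ∀ a b, (a, b) ∈ U → f a b = g a b) (hp : (s, z) ∈ U) :
    Psi f s z = Psi g s z := by
  rw [Psi_eq_partial, Psi_eq_partial, partialS_congr hU h hp, partialZ_congr hU h hp]

end Congr

section Pointwise

variable {f g : ℝ → ℝ → ℝ} {s z : ℝ}

lemma partialS_eq_fderiv (hf : DifferentiableAt ℝ (uncurry f) (s, z)) :
    partialS f s z = fderiv ℝ (uncurry f) (s, z) (1, 0) :=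
  (hf.hasFDerivAt.comp_hasDerivAt (f := fun x => (x, z)) s
    ((hasDerivAt_id s).prodMk (hasDerivAt_const s z))).deriv

lemma partialZ_eq_fderiv (hf : DifferentiableAt ℝ (uncurry f) (s, z)) :
    partialZ f s z = fderiv ℝ (uncurry f) (s, z) (0, 1) :=
  (hf.hasFDerivAt.comp_hasDerivAt (f := fun y => (s, y)) z
    ((hasDerivAt_const z s).prodMk (hasDerivAt_id z))).deriv

lemma hasDerivAt_partialS (hf : DifferentiableAt ℝ (uncurry f) (s, z)) :
    HasDerivAt (fun x => f x z) (partialS f s z) s :=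
  (hf.comp (f := fun x => (x, z)) s
    (differentiableAt_id.prodMk (differentiableAt_const z))).hasDerivAt

lemma hasDerivAt_partialZ (hf : DifferentiableAt ℝ (uncurry f) (s, z)) :
    HasDerivAt (fun y => f s y) (partialZ f s z) z :=
  (hf.comp (f := fun y => (s, y)) z
    ((differentiableAt_const s).prodMk differentiableAt_id)).hasDerivAt

lemma Psi_eq_neg_fderiv (hf : DifferentiableAt ℝ (uncurry f) (s, z)) :
    Psi f s z = -fderiv ℝ (uncurry f) (s, z) (s, z) := by
  have hsz : ((s, z) : ℝ × ℝ) = s • ((1 : ℝ), (0 : ℝ)) + z • ((0 : ℝ), (1 : ℝ)) := by simp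
  rw [Psi_eq_partial, partialS_eq_fderiv hf, partialZ_eq_fderiv hf, hsz, map_add, map_smul,
    map_smul, ← hsz]
  simp only [smul_eq_mul]
  ring

lemma Psi_mul (hf : DifferentiableAt ℝ (uncurry f) (s, z))
    (hg : DifferentiableAt ℝ (uncurry g) (s, z)) :
    Psi (fun s z => f s z * g s z) s z = f s z * Psi g s z + g s z * Psi f s z := by
  simp only [Psi]
  rw [deriv_fun_mul (hasDerivAt_partialS hf).differentiableAt
      (hasDerivAt_partialS hg).differentiableAt,
    deriv_fun_mul (hasDerivAt_partialZ hf).differentiableAt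
      (hasDerivAt_partialZ hg).differentiableAt]
  ring

end Pointwise

section Powers

variable {f : ℝ → ℝ → ℝ} {s z : ℝ}

lemma Psi_zpow (hz : z ≠ 0) (m : ℤ) : Psi (fun _ z => z ^ m) s z = -m * z ^ m := by
  rw [Psi, deriv_const, deriv_zpow, zpow_sub_one₀ hz]
  field_simp
  ring

lemma Psi_zpow_mul (hz : z ≠ 0) (hf : DifferentiableAt ℝ (uncurry f) (s, z)) (m : ℤ) :
    Psi (fun s z => z ^ m * f s z) s z = z ^ m * (Psi f s z - m * f s z) := by
  have hpow : DifferentiableAt ℝ (uncurry fun (_ z : ℝ) => z ^ m) (s, z) :=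
    (differentiableAt_zpow.mpr (Or.inl hz)).comp (f := fun x : ℝ × ℝ => x.2) (s, z)
      differentiableAt_snd
  rw [Psi_mul hpow hf, Psi_zpow hz]
  ring

lemma Psi_pow_mul (hz : z ≠ 0) (hf : DifferentiableAt ℝ (uncurry f) (s, z)) (n : ℕ) :
    Psi (fun s z => z ^ n * f s z) s z = z ^ n * (Psi f s z - n * f s z) := by
  simpa using Psi_zpow_mul hz hf n

lemma pow_mul_Psi_div_pow (hz : z ≠ 0) (hf : DifferentiableAt ℝ (uncurry f) (s, z)) (n : ℕ) :
    z ^ n * Psi (fun s z => f s z / z ^ n) s z = Psi f s z + n * f s z := by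
  have h := Psi_zpow_mul hz hf (-n)
  simp only [zpow_neg, zpow_natCast, Int.cast_neg, Int.cast_natCast, ← div_eq_inv_mul] at h
  rw [h]
  field_simp
  ring

end Powers

lemma fderiv_fderiv_apply_self {E : Type*} [NormedAddCommGroup E] [NormedSpace ℝ E]
    {F : E → ℝ} {x : E} (hF : ContDiffAt ℝ 2 F x) (v : E) :
    fderiv ℝ (fun y => fderiv ℝ F y y) x v
      = fderiv ℝ (fun y => fderiv ℝ F y v) x x + fderiv ℝ F x v := by
  have hG : DifferentiableAt ℝ (fderiv ℝ F) x :=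
    (hF.fderiv_right (m := 1) le_rfl).differentiableAt one_ne_zero
  rw [fderiv_clm_apply (u := fun y => y) hG differentiableAt_id,
    fderiv_clm_apply hG (differentiableAt_const v)]
  simp only [fderiv_fun_id, ContinuousLinearMap.comp_id, add_apply,
    ContinuousLinearMap.flip_apply, hF.isSymmSndFDerivAt (by simp) v x, fderiv_fun_const,
    Pi.zero_apply, ContinuousLinearMap.comp_zero, zero_add]
  ring

section OpenSet

variable {U : Set (ℝ × ℝ)} {f : ℝ → ℝ → ℝ} {s z : ℝ}

lemma contDiffOn_partialS {m n : WithTop ℕ∞} (hU : IsOpen U)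
    (hf : ContDiffOn ℝ n (uncurry f) U) (hmn : m + 1 ≤ n) :
    ContDiffOn ℝ m (uncurry (partialS f)) U := by
  have hn : n ≠ 0 := by rintro rfl; simp at hmn
  exact ((hf.fderiv_of_isOpen hU hmn).clm_apply contDiffOn_const).congr fun q hq =>
    partialS_eq_fderiv ((hf.differentiableOn hn).differentiableAt (hU.mem_nhds hq))

lemma contDiffOn_partialZ {m n : WithTop ℕ∞} (hU : IsOpen U)
    (hf : ContDiffOn ℝ n (uncurry f) U) (hmn : m + 1 ≤ n) :
    ContDiffOn ℝ m (uncurry (partialZ f)) U := by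
  have hn : n ≠ 0 := by rintro rfl; simp at hmn
  exact ((hf.fderiv_of_isOpen hU hmn).clm_apply contDiffOn_const).congr fun q hq =>
    partialZ_eq_fderiv ((hf.differentiableOn hn).differentiableAt (hU.mem_nhds hq))

lemma contDiffOn_Psi {m n : WithTop ℕ∞} (hU : IsOpen U)
    (hf : ContDiffOn ℝ n (uncurry f) U) (hmn : m + 1 ≤ n) :
    ContDiffOn ℝ m (uncurry (Psi f)) U := by
  have hn : n ≠ 0 := by rintro rfl; simp at hmn
  exact ((hf.fderiv_of_isOpen hU hmn).clm_apply contDiffOn_id).neg.congr fun q hq =>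
    Psi_eq_neg_fderiv ((hf.differentiableOn hn).differentiableAt (hU.mem_nhds hq))

lemma differentiableAt_uncurry_Psi (hU : IsOpen U) (hf : ContDiffOn ℝ 2 (uncurry f) U)
    (hp : (s, z) ∈ U) : DifferentiableAt ℝ (uncurry (Psi f)) (s, z) :=
  ((contDiffOn_Psi (m := 1) hU hf le_rfl).differentiableOn one_ne_zero).differentiableAt
    (hU.mem_nhds hp)

lemma differentiableAt_uncurry_partialS (hU : IsOpen U) (hf : ContDiffOn ℝ 2 (uncurry f) U)
    (hp : (s, z) ∈ U) : DifferentiableAt ℝ (uncurry (partialS f)) (s, z) :=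
  ((contDiffOn_partialS (m := 1) hU hf le_rfl).differentiableOn one_ne_zero).differentiableAt
    (hU.mem_nhds hp)

lemma differentiableAt_uncurry_partialZ (hU : IsOpen U) (hf : ContDiffOn ℝ 2 (uncurry f) U)
    (hp : (s, z) ∈ U) : DifferentiableAt ℝ (uncurry (partialZ f)) (s, z) :=
  ((contDiffOn_partialZ (m := 1) hU hf le_rfl).differentiableOn one_ne_zero).differentiableAt
    (hU.mem_nhds hp)

lemma Psi_curry_fderiv_apply (hU : IsOpen U) (hf : ContDiffOn ℝ 2 (uncurry f) U)
    (hp : (s, z) ∈ U) (v : ℝ × ℝ) :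
    Psi (curry fun q => fderiv ℝ (uncurry f) q v) s z
      = fderiv ℝ (uncurry (Psi f)) (s, z) v + fderiv ℝ (uncurry f) (s, z) v := by
  have hF : ContDiffAt ℝ 2 (uncurry f) (s, z) := hf.contDiffAt (hU.mem_nhds hp)
  have hG : DifferentiableAt ℝ (fderiv ℝ (uncurry f)) (s, z) :=
    (hF.fderiv_right (m := 1) le_rfl).differentiableAt one_ne_zero
  have hΨ : uncurry (Psi f) =ᶠ[𝓝 (s, z)] fun q => -fderiv ℝ (uncurry f) q q :=
    eventually_of_mem (hU.mem_nhds hp) fun q hq =>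
      Psi_eq_neg_fderiv ((hf.differentiableOn two_ne_zero).differentiableAt (hU.mem_nhds hq))
  rw [Psi_eq_neg_fderiv (f := curry fun q => fderiv ℝ (uncurry f) q v)
      (hG.clm_apply (differentiableAt_const v)),
    hΨ.fderiv_eq, fderiv_fun_neg, neg_apply, fderiv_fderiv_apply_self hF]
  simp only [uncurry_curry]
  ring

lemma Psi_partialS (hU : IsOpen U) (hf : ContDiffOn ℝ 2 (uncurry f) U) (hp : (s, z) ∈ U) :
    Psi (partialS f) s z = partialS (Psi f) s z + partialS f s z := by
  have hdf : ∀ q ∈ U, DifferentiableAt ℝ (uncurry f) q := fun q hq =>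
    (hf.differentiableOn two_ne_zero).differentiableAt (hU.mem_nhds hq)
  have hdΨ := differentiableAt_uncurry_Psi hU hf hp
  rw [Psi_congr (g := curry fun q => fderiv ℝ (uncurry f) q (1, 0)) hU
      (fun a b hab => partialS_eq_fderiv (hdf _ hab)) hp,
    Psi_curry_fderiv_apply hU hf hp, partialS_eq_fderiv hdΨ, partialS_eq_fderiv (hdf _ hp)]

lemma Psi_partialZ (hU : IsOpen U) (hf : ContDiffOn ℝ 2 (uncurry f) U) (hp : (s, z) ∈ U) :
    Psi (partialZ f) s z = partialZ (Psi f) s z + partialZ f s z := by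
  have hdf : ∀ q ∈ U, DifferentiableAt ℝ (uncurry f) q := fun q hq =>
    (hf.differentiableOn two_ne_zero).differentiableAt (hU.mem_nhds hq)
  have hdΨ := differentiableAt_uncurry_Psi hU hf hp
  rw [Psi_congr (g := curry fun q => fderiv ℝ (uncurry f) q (0, 1)) hU
      (fun a b hab => partialZ_eq_fderiv (hdf _ hab)) hp,
    Psi_curry_fderiv_apply hU hf hp, partialZ_eq_fderiv hdΨ, partialZ_eq_fderiv (hdf _ hp)]

lemma sq_mul_Psi_partialS_div (hU : IsOpen U) (hf : ContDiffOn ℝ 2 (uncurry f) U)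
    (hp : (s, z) ∈ U) (hz : z ≠ 0) :
    z ^ 2 * Psi (fun s z => partialS f s z / z) s z
      = z * partialS (fun s z => Psi f s z + 2 * f s z) s z := by
  have hdf : DifferentiableAt ℝ (uncurry f) (s, z) :=
    (hf.contDiffAt (hU.mem_nhds hp)).differentiableAt two_ne_zero
  have hdΨ := differentiableAt_uncurry_Psi hU hf hp
  have hdS := differentiableAt_uncurry_partialS hU hf hp
  have hdiv := pow_mul_Psi_div_pow hz hdS 1
  simp only [pow_one, Nat.cast_one, one_mul] at hdiv
  have hlin : partialS (fun s z => Psi f s z + 2 * f s z) s z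
      = partialS (Psi f) s z + 2 * partialS f s z :=
    ((hasDerivAt_partialS hdΨ).add ((hasDerivAt_partialS hdf).const_mul 2)).deriv
  calc z ^ 2 * Psi (fun s z => partialS f s z / z) s z
      = z * (z * Psi (fun s z => partialS f s z / z) s z) := by ring
    _ = z * partialS (fun s z => Psi f s z + 2 * f s z) s z := by
      rw [hdiv, Psi_partialS hU hf hp, hlin]
      ring

lemma sq_mul_Psi_partialZ_div (hU : IsOpen U) (hf : ContDiffOn ℝ 2 (uncurry f) U)
    (hp : (s, z) ∈ U) (hz : z ≠ 0) :
    z ^ 2 * Psi (fun s z => partialZ f s z / z) s z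
      = z * partialZ (fun s z => Psi f s z + 2 * f s z) s z := by
  have hdf : DifferentiableAt ℝ (uncurry f) (s, z) :=
    (hf.contDiffAt (hU.mem_nhds hp)).differentiableAt two_ne_zero
  have hdΨ := differentiableAt_uncurry_Psi hU hf hp
  have hdZ := differentiableAt_uncurry_partialZ hU hf hp
  have hdiv := pow_mul_Psi_div_pow hz hdZ 1
  simp only [pow_one, Nat.cast_one, one_mul] at hdiv
  have hlin : partialZ (fun s z => Psi f s z + 2 * f s z) s z
      = partialZ (Psi f) s z + 2 * partialZ f s z :=
    ((hasDerivAt_partialZ hdΨ).add ((hasDerivAt_partialZ hdf).const_mul 2)).deriv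
  calc z ^ 2 * Psi (fun s z => partialZ f s z / z) s z
      = z * (z * Psi (fun s z => partialZ f s z / z) s z) := by ring
    _ = z * partialZ (fun s z => Psi f s z + 2 * f s z) s z := by
      rw [hdiv, Psi_partialZ hU hf hp, hlin]
      ring

lemma Psi_mul_partialS (hU : IsOpen U) (hf : ContDiffOn ℝ 2 (uncurry f) U)
    (hp : (s, z) ∈ U) (hz : z ≠ 0) :
    Psi (fun s z => z * partialS f s z) s z = z * partialS (Psi f) s z := by
  have hdS := differentiableAt_uncurry_partialS hU hf hp
  have h := Psi_pow_mul hz hdS 1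
  simp only [pow_one, Nat.cast_one, one_mul] at h
  rw [h, Psi_partialS hU hf hp]
  ring

lemma Psi_mul_partialZ (hU : IsOpen U) (hf : ContDiffOn ℝ 2 (uncurry f) U)
    (hp : (s, z) ∈ U) (hz : z ≠ 0) :
    Psi (fun s z => z * partialZ f s z) s z = z * partialZ (Psi f) s z := by
  have hdZ := differentiableAt_uncurry_partialZ hU hf hp
  have h := Psi_pow_mul hz hdZ 1
  simp only [pow_one, Nat.cast_one, one_mul] at h
  rw [h, Psi_partialZ hU hf hp]
  ring

end OpenSet

theorem stmt_3 (Θ : ℝ → ℝ → ℝ)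
    (hΘ : ContDiffOn ℝ 3 (Function.uncurry Θ) {p : ℝ × ℝ | p.2 ≠ 0}) :
    ∀ s z : ℝ, z ≠ 0 →
      (1 / z ^ 2) *
          Psi (fun s z =>
            z ^ 2 * Psi (fun s z => z ^ 2 * Psi (fun s z => Θ s z / z ^ 2) s z) s z) s z
        = -2 * Psi (fun s z => z ^ 2 * Psi (fun s z => Θ s z / z ^ 2) s z) s z
          - (s / z) *
              Psi (fun s z =>
                z ^ 2 * Psi (fun s z => deriv (fun s' => Θ s' z) s / z) s z) s z
          - Psi (fun s z =>
              z ^ 2 * Psi (fun s z => deriv (fun z' => Θ s z') z / z) s z) s z := by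
  intro s z hz
  set U : Set (ℝ × ℝ) := {p | p.2 ≠ 0}
  have hU : IsOpen U := isOpen_ne.preimage continuous_snd
  have hp : (s, z) ∈ U := hz
  have hΘ₂ : ContDiffOn ℝ 2 (uncurry Θ) U := hΘ.of_le (by norm_num)
  set A : ℝ → ℝ → ℝ := fun s z => Psi Θ s z + 2 * Θ s z
  have hA : ContDiffOn ℝ 2 (uncurry A) U :=
    (contDiffOn_Psi hU hΘ le_rfl).add (contDiffOn_const.mul hΘ₂)
  have hΨA := differentiableAt_uncurry_Psi hU hA hp
  have hΘ_div : ∀ a b, (a, b) ∈ U → b ^ 2 * Psi (fun s z => Θ s z / z ^ 2) a b = A a b :=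
    fun a b hb => by
      simpa using pow_mul_Psi_div_pow hb
        ((hΘ.contDiffAt (hU.mem_nhds hb)).differentiableAt (by norm_num)) 2
  have hΘs_div : ∀ a b, (a, b) ∈ U →
      b ^ 2 * Psi (fun s z => deriv (fun s' => Θ s' z) s / z) a b = b * partialS A a b :=
    fun a b hb => sq_mul_Psi_partialS_div hU hΘ₂ hb hb
  have hΘz_div : ∀ a b, (a, b) ∈ U →
      b ^ 2 * Psi (fun s z => deriv (fun z' => Θ s z') z / z) a b = b * partialZ A a b :=
    fun a b hb => sq_mul_Psi_partialZ_div hU hΘ₂ hb hb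
  have hL :
      Psi (fun s z => z ^ 2 * Psi (fun s z => z ^ 2 * Psi (fun s z => Θ s z / z ^ 2) s z) s z) s z
        = z ^ 2 * (Psi (Psi A) s z - 2 * Psi A s z) := by
    rw [Psi_congr (g := fun s z => z ^ 2 * Psi A s z) hU
      (fun a b hb => by rw [Psi_congr hU hΘ_div hb]) hp]
    simpa using Psi_pow_mul hz hΨA 2
  rw [hL, Psi_congr hU hΘ_div hp, Psi_congr hU hΘs_div hp, Psi_congr hU hΘz_div hp,
    Psi_mul_partialS hU hA hp hz, Psi_mul_partialZ hU hA hp hz, Psi_eq_partial (Psi A)]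
  field_simp
  ring
end

section
/- Let Θ : ℝ² → ℝ be twice continuously differentiable. Then for every y = (y⁰,ȳ) ∈ ℝ × ℝⁿ with ȳ ≠ 0 and y⁰ ≠ 0, and for all 1 ≤ k,l ≤ n, one has u·∂/∂y^k[Θ(s,z)·u_l](y) = Θ(s,z)·δ_{kl} + Θ_s(s,z)·x^k·u_l + (1/z)·Ψ((s,z) ↦ z·Θ(s,z))(s,z)·u_k·u_l, where (s,z) = (s(y), z(y)) and δ_{kl} is the Kronecker delta. -/
open Finset

/-- `u = |ȳ|`, the Euclidean norm of `ȳ`. -/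
noncomputable def uNorm {n : ℕ} (yb : Fin n → ℝ) : ℝ := Real.sqrt (∑ i, yb i ^ 2)

/-- `s(y) = ⟨x̄, ȳ⟩ / |ȳ|`. -/
noncomputable def sVar {n : ℕ} (xb yb : Fin n → ℝ) : ℝ := (∑ i, xb i * yb i) / uNorm yb

/-- `z(y) = y⁰ / |ȳ|`. -/
noncomputable def zVar {n : ℕ} (y0 : ℝ) (yb : Fin n → ℝ) : ℝ := y0 / uNorm yb

/-!
Differentiate along the coordinate line `t ↦ update ȳ k t`. Along any path `γ` with `γ t ≠ 0`,
`u' = ⟨γ, γ'⟩ / u`, `s' = (⟨x̄, γ'⟩ - s u') / u` and `z' = -z u' / u`, and for `γ' = e_k` this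
gives `u' = u_k`. The chain rule and the quotient rule for `y^l / u` turn `u · ∂_k[Θ u_l]` into
`Θ (δ_kl - u_k u_l) + Θ_s (x^k - s u_k) u_l - Θ_z z u_k u_l`, and the identity
`Ψ(zΘ) = z (Ψ(Θ) - Θ)` regroups this into the right-hand side.
-/

open Function

theorem uNorm_pos {n : ℕ} {yb : Fin n → ℝ} (hyb : yb ≠ 0) : 0 < uNorm yb := by
  obtain ⟨i, hi⟩ := Function.ne_iff.mp hyb
  exact Real.sqrt_pos.mpr <| Finset.sum_pos' (fun j _ => sq_nonneg (yb j)) ⟨i, mem_univ i, by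
    simpa [sq_pos_iff] using hi⟩

theorem Psi_mul_snd {Θ : ℝ → ℝ → ℝ} {s z : ℝ} (hΘ : DifferentiableAt ℝ (fun z' => Θ s z') z) :
    Psi (fun s z => z * Θ s z) s z = z * (Psi Θ s z - Θ s z) := by
  have hz : deriv (fun z' => z' * Θ s z') z = Θ s z + z * deriv (fun z' => Θ s z') z := by
    rw [((hasDerivAt_id' z).fun_mul hΘ.hasDerivAt).deriv, one_mul]
  simp only [Psi, deriv_const_mul_field', hz]
  ring

theorem hasDerivAt_uncurry_comp {Θ : ℝ → ℝ → ℝ} {f g : ℝ → ℝ} {f' g' t : ℝ}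
    (hΘ : DifferentiableAt ℝ (uncurry Θ) (f t, g t)) (hf : HasDerivAt f f' t)
    (hg : HasDerivAt g g' t) :
    HasDerivAt (fun t => Θ (f t) (g t))
      (f' * deriv (fun s => Θ s (g t)) (f t) + g' * deriv (fun z => Θ (f t) z) (g t)) t := by
  set L := fderiv ℝ (uncurry Θ) (f t, g t)
  have hL : HasFDerivAt (uncurry Θ) L (f t, g t) := hΘ.hasFDerivAt
  have hs : HasDerivAt (fun s => Θ s (g t)) (L (1, 0)) (f t) :=
    hL.comp_hasDerivAt_of_eq (f t) ((hasDerivAt_id' (f t)).prodMk (hasDerivAt_const _ (g t))) rfl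
  have hz : HasDerivAt (fun z => Θ (f t) z) (L (0, 1)) (g t) :=
    hL.comp_hasDerivAt_of_eq (g t) ((hasDerivAt_const _ (f t)).prodMk (hasDerivAt_id' (g t))) rfl
  have hsplit : L (f', g') = f' * L (1, 0) + g' * L (0, 1) := by
    rw [← smul_eq_mul, ← smul_eq_mul, ← map_smul, ← map_smul, ← map_add]
    simp
  rw [hs.deriv, hz.deriv, ← hsplit]
  exact hL.comp_hasDerivAt t (hf.prodMk hg)

section Path

variable {n : ℕ} {γ : ℝ → Fin n → ℝ} {γ' : Fin n → ℝ} {t : ℝ}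

theorem hasDerivAt_uNorm (hγ : HasDerivAt γ γ' t) (ht : γ t ≠ 0) :
    HasDerivAt (fun t => uNorm (γ t)) ((∑ i, γ t i * γ' i) / uNorm (γ t)) t := by
  have hsq : HasDerivAt (fun t => ∑ i, γ t i ^ 2) (∑ i, 2 * γ t i * γ' i) t := by
    refine HasDerivAt.fun_sum fun i _ => ?_
    simpa using (hasDerivAt_pi.mp hγ i).fun_pow 2
  have hne : ∑ i, γ t i ^ 2 ≠ 0 := by
    have := uNorm_pos ht
    rw [uNorm, Real.sqrt_pos] at this
    exact this.ne'
  simp only [uNorm]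
  convert hsq.sqrt hne using 1
  simp only [mul_assoc, ← mul_sum]
  ring

theorem hasDerivAt_sVar (xb : Fin n → ℝ) (hγ : HasDerivAt γ γ' t) (ht : γ t ≠ 0) :
    HasDerivAt (fun t => sVar xb (γ t))
      ((∑ i, xb i * γ' i - sVar xb (γ t) * ((∑ i, γ t i * γ' i) / uNorm (γ t)))
        / uNorm (γ t)) t := by
  have hinner : HasDerivAt (fun t => ∑ i, xb i * γ t i) (∑ i, xb i * γ' i) t :=
    HasDerivAt.fun_sum fun i _ => (hasDerivAt_pi.mp hγ i).const_mul (xb i)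
  refine (hinner.fun_div (hasDerivAt_uNorm hγ ht) (uNorm_pos ht).ne').congr_deriv ?_
  have := (uNorm_pos ht).ne'
  simp only [sVar]
  field_simp

theorem hasDerivAt_zVar (y0 : ℝ) (hγ : HasDerivAt γ γ' t) (ht : γ t ≠ 0) :
    HasDerivAt (fun t => zVar y0 (γ t))
      (-zVar y0 (γ t) * ((∑ i, γ t i * γ' i) / uNorm (γ t)) / uNorm (γ t)) t := by
  refine ((hasDerivAt_const t y0).fun_div (hasDerivAt_uNorm hγ ht) (uNorm_pos ht).ne').congr_deriv ?_
  have := (uNorm_pos ht).ne'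
  simp only [zVar]
  field_simp
  ring

end Path

theorem sum_mul_single {n : ℕ} (yb : Fin n → ℝ) (k : Fin n) :
    ∑ i, yb i * (Pi.single k 1 : Fin n → ℝ) i = yb k := by
  simp [Pi.single_apply]

theorem stmt_6_general (n : ℕ) (xb : Fin n → ℝ)
    (Θ : ℝ → ℝ → ℝ) (hΘ : ContDiff ℝ 2 (Function.uncurry Θ))
    (y0 : ℝ) (yb : Fin n → ℝ) (hyb : yb ≠ 0) (hy0 : y0 ≠ 0) (k l : Fin n) :
    uNorm yb *
        deriv (fun t =>
          Θ (sVar xb (Function.update yb k t)) (zVar y0 (Function.update yb k t)) *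
            (Function.update yb k t l / uNorm (Function.update yb k t))) (yb k)
      = Θ (sVar xb yb) (zVar y0 yb) * (if k = l then (1 : ℝ) else 0)
        + deriv (fun s' => Θ s' (zVar y0 yb)) (sVar xb yb) * xb k * (yb l / uNorm yb)
        + (1 / zVar y0 yb) * Psi (fun s z => z * Θ s z) (sVar xb yb) (zVar y0 yb) *
            (yb k / uNorm yb) * (yb l / uNorm yb) := by
  have hΘd : Differentiable ℝ (uncurry Θ) := hΘ.differentiable two_ne_zero
  have hupdate : HasDerivAt (update yb k) (Pi.single k 1) (yb k) := hasDerivAt_update yb k (yb k)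
  have hat : update yb k (yb k) = yb := update_eq_self k yb
  have hne : update yb k (yb k) ≠ 0 := by rwa [hat]
  have hu := uNorm_pos hyb
  have hz : zVar y0 yb ≠ 0 := div_ne_zero hy0 hu.ne'
  have hderiv := (hasDerivAt_uncurry_comp (hΘd _) (hasDerivAt_sVar xb hupdate hne)
    (hasDerivAt_zVar y0 hupdate hne)).fun_mul
    ((hasDerivAt_pi.mp hupdate l).fun_div (hasDerivAt_uNorm hupdate hne) (uNorm_pos hne).ne')
  have hΘz : DifferentiableAt ℝ (fun z => Θ (sVar xb yb) z) (zVar y0 yb) :=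
    (hΘd _).comp _ ((differentiableAt_const _).prodMk differentiableAt_id)
  rw [hderiv.deriv, Psi_mul_snd hΘz]
  simp only [hat, sum_mul_single, Psi]
  rw [Pi.single_comm, Pi.single_apply]
  field_simp
  ring

theorem stmt_6 (n : ℕ) (hn : 2 ≤ n) (xb : Fin n → ℝ)
    (Θ : ℝ → ℝ → ℝ) (hΘ : ContDiff ℝ 2 (Function.uncurry Θ))
    (y0 : ℝ) (yb : Fin n → ℝ) (hyb : yb ≠ 0) (hy0 : y0 ≠ 0) (k l : Fin n) :
    uNorm yb *
        deriv (fun t =>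
          Θ (sVar xb (Function.update yb k t)) (zVar y0 (Function.update yb k t)) *
            (Function.update yb k t l / uNorm (Function.update yb k t))) (yb k)
      = Θ (sVar xb yb) (zVar y0 yb) * (if k = l then (1 : ℝ) else 0)
        + deriv (fun s' => Θ s' (zVar y0 yb)) (sVar xb yb) * xb k * (yb l / uNorm yb)
        + (1 / zVar y0 yb) * Psi (fun s z => z * Θ s z) (sVar xb yb) (zVar y0 yb) *
            (yb k / uNorm yb) * (yb l / uNorm yb) :=
  stmt_6_general n xb Θ hΘ y0 yb hyb hy0 k l
end

section
/- Let U, W : ℝ² → ℝ be three times continuously differentiable and, for 1 ≤ i ≤ n, define Gⁱ(y) := u²·W(s(y), z(y))·u_i + u²·U(s(y), z(y))·x^i on ℝ × (ℝⁿ∖{0}). Then for every y with ȳ ≠ 0, ∂³Gⁱ/∂y⁰∂y⁰∂y⁰(y) = (1/u)·[U_zzz(s,z)·x^i + W_zzz(s,z)·u_i], where (s,z) = (s(y), z(y)). (This is the component Bⁱ₀₀₀ of the Berwald curvature formula of Theorem 3.1.) -/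
open Finset

/-- The spray coefficient `Gⁱ(y) = u²·W(s,z)·u_i + u²·U(s,z)·xⁱ`. -/
noncomputable def Gi {n : ℕ} (xb : Fin n → ℝ) (U W : ℝ → ℝ → ℝ) (i : Fin n)
    (y0 : ℝ) (yb : Fin n → ℝ) : ℝ :=
  uNorm yb ^ 2 * W (sVar xb yb) (zVar y0 yb) * (yb i / uNorm yb)
    + uNorm yb ^ 2 * U (sVar xb yb) (zVar y0 yb) * xb i

/-! Along the `y⁰`-direction `s` and `u` are constant and `z = y⁰ / u`, so `Gⁱ` is a linear
combination of `W(s, ·)` and `U(s, ·)` composed with the dilation `t ↦ u⁻¹ t`; each derivative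
in `y⁰` contributes a factor `u⁻¹`, and `u² · u⁻³ = u⁻¹`. -/

theorem iteratedDeriv_add_comp_const_mul {𝕜 : Type*} [NontriviallyNormedField 𝕜] {n : ℕ}
    {F G : 𝕜 → 𝕜} (hF : ContDiff 𝕜 n F) (hG : ContDiff 𝕜 n G) (c d e x : 𝕜) :
    iteratedDeriv n (fun t => d * F (c * t) + e * G (c * t)) x
      = c ^ n * (d * iteratedDeriv n F (c * x) + e * iteratedDeriv n G (c * x)) := by
  have hFc : ContDiff 𝕜 n fun t => F (c * t) := hF.comp (contDiff_const.mul contDiff_id)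
  have hGc : ContDiff 𝕜 n fun t => G (c * t) := hG.comp (contDiff_const.mul contDiff_id)
  rw [iteratedDeriv_fun_add (contDiff_const.mul hFc).contDiffAt
      (contDiff_const.mul hGc).contDiffAt,
    iteratedDeriv_const_mul_field, iteratedDeriv_const_mul_field,
    iteratedDeriv_comp_const_mul hF, iteratedDeriv_comp_const_mul hG]
  ring

theorem ContDiff.uncurry_apply {𝕜 E F G : Type*} [NontriviallyNormedField 𝕜]
    [NormedAddCommGroup E] [NormedSpace 𝕜 E] [NormedAddCommGroup F] [NormedSpace 𝕜 F]
    [NormedAddCommGroup G] [NormedSpace 𝕜 G] {n : WithTop ℕ∞} {f : E → F → G}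
    (hf : ContDiff 𝕜 n (Function.uncurry f)) (a : E) : ContDiff 𝕜 n (f a) :=
  hf.comp (contDiff_prodMk_right a)

theorem zVar_eq_inv_mul {n : ℕ} (y0 : ℝ) (yb : Fin n → ℝ) :
    zVar y0 yb = (uNorm yb)⁻¹ * y0 :=
  div_eq_inv_mul _ _

theorem Gi_eq_comp_inv_mul {n : ℕ} (xb : Fin n → ℝ) (U W : ℝ → ℝ → ℝ) (i : Fin n)
    (yb : Fin n → ℝ) :
    (fun t => Gi xb U W i t yb)
      = fun t => (uNorm yb ^ 2 * (yb i / uNorm yb)) * W (sVar xb yb) ((uNorm yb)⁻¹ * t)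
          + (uNorm yb ^ 2 * xb i) * U (sVar xb yb) ((uNorm yb)⁻¹ * t) := by
  funext t
  rw [Gi, zVar_eq_inv_mul]
  ring

theorem stmt_10_general (n : ℕ) (xb : Fin n → ℝ)
    (U W : ℝ → ℝ → ℝ) (hU : ContDiff ℝ 3 (Function.uncurry U))
    (hW : ContDiff ℝ 3 (Function.uncurry W))
    (i : Fin n) (y0 : ℝ) (yb : Fin n → ℝ) :
    deriv^[3] (fun t => Gi xb U W i t yb) y0
      = (1 / uNorm yb) *
          (deriv^[3] (U (sVar xb yb)) (zVar y0 yb) * xb i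
            + deriv^[3] (W (sVar xb yb)) (zVar y0 yb) * (yb i / uNorm yb)) := by
  simp only [← iteratedDeriv_eq_iterate]
  rw [Gi_eq_comp_inv_mul,
    iteratedDeriv_add_comp_const_mul (hW.uncurry_apply _) (hU.uncurry_apply _), zVar_eq_inv_mul]
  -- at `u = 0` both sides are `0`: `Gⁱ` carries the factor `u²`, and `1 / 0 = 0`
  rcases eq_or_ne (uNorm yb) 0 with hu | hu
  · simp [hu]
  · rw [inv_pow]
    field_simp
    ring

theorem stmt_10 (n : ℕ) (hn : 2 ≤ n) (xb : Fin n → ℝ)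
    (U W : ℝ → ℝ → ℝ) (hU : ContDiff ℝ 3 (Function.uncurry U))
    (hW : ContDiff ℝ 3 (Function.uncurry W))
    (i : Fin n) (y0 : ℝ) (yb : Fin n → ℝ) (hyb : yb ≠ 0) :
    deriv^[3] (fun t => Gi xb U W i t yb) y0
      = (1 / uNorm yb) *
          (deriv^[3] (U (sVar xb yb)) (zVar y0 yb) * xb i
            + deriv^[3] (W (sVar xb yb)) (zVar y0 yb) * (yb i / uNorm yb)) :=
  stmt_10_general n xb U W hU hW i y0 yb
end

section
/- Let U : ℝ × (0,∞) → ℝ be three times continuously differentiable. Then U satisfies z·Ψ(U_s/z)(s,z) = 0, z·Ψ(U_z/z)(s,z) = 0, and U_zzz(s,z) = 0 for all s ∈ ℝ, z > 0 if and only if there exist real constants g₁, g₂, g₃, g₄ such that U(s,z) = g₁·s²/2 + g₂·s·z + g₃·z²/2 + g₄ for all s ∈ ℝ, z > 0. (This is the structure of the function U appearing in the vanishing-Berwald-curvature characterization of Theorem 3.4.) -/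
/-!
Write `P = U_s` and `Q = U_z`. The two `Ψ`-conditions say that `P` and `Q` satisfy Euler's
identity `s Θ_s + z Θ_z = Θ`. Because `U_zzz = 0`, `U(s,z) = A(s) + B(s) z + C(s) z²` with
`A, B, C` smooth, and comparing the coefficients of `1, z, z²` turns the Euler identities into
`s A'' = A'`, `s B' = B` and `s C' = 0` on the whole line. A continuous `g` with `s g(s) = 0`
vanishes, so differentiating `s f' = f` gives `f'' = 0`, i.e. `f = f'(0) s`. Hence `A'` and `B`
are linear and `C` is constant.
-/

open Set Filter Topology

lemma deriv_quadratic (a b c : ℝ) :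
    deriv (fun z : ℝ => a + b * z + c * z ^ 2) = fun z => b + 2 * c * z := by
  ext z
  simp (disch := fun_prop)
  ring

lemma iterate_deriv_three_quadratic (a b c : ℝ) :
    deriv^[3] (fun z : ℝ => a + b * z + c * z ^ 2) = 0 := by
  ext z
  simp [deriv_quadratic]

theorem IsOpen.forall_iterate_deriv_three_eq_zero_iff {s : Set ℝ} (hs : IsOpen s)
    (hs' : IsPreconnected s) {f : ℝ → ℝ} (hf : ContDiffOn ℝ 3 f s) :
    (∀ z ∈ s, deriv^[3] f z = 0) ↔ ∃ a b c : ℝ, ∀ z ∈ s, f z = a + b * z + c * z ^ 2 := by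
  constructor
  · intro h
    have hf₁ : ContDiffOn ℝ 2 (deriv f) s := hf.deriv_of_isOpen hs (by norm_num)
    have hf₂ : ContDiffOn ℝ 1 (deriv (deriv f)) s := hf₁.deriv_of_isOpen hs (by norm_num)
    obtain ⟨c, hc⟩ := hs.exists_is_const_of_deriv_eq_zero hs' (hf₂.differentiableOn one_ne_zero) h
    obtain ⟨b, hb⟩ := hs.exists_eq_add_of_deriv_eq hs' (hf₁.differentiableOn (by norm_num))
      (g := fun z => c * z) (by fun_prop) fun z hz => by simp [hc z hz]
    obtain ⟨a, ha⟩ := hs.exists_eq_add_of_deriv_eq hs' (hf.differentiableOn (by norm_num))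
      (g := fun z => b * z + c / 2 * z ^ 2) (by fun_prop) fun z hz => by
        simp (disch := fun_prop) [hb hz]
        ring
    exact ⟨a, b, c / 2, fun z hz => by rw [ha hz]; ring⟩
  · rintro ⟨a, b, c, h⟩ z hz
    have hquad : f =ᶠ[𝓝 z] fun z => a + b * z + c * z ^ 2 :=
      eventually_of_mem (hs.mem_nhds hz) h
    rw [← iteratedDeriv_eq_iterate, hquad.iteratedDeriv_eq, iteratedDeriv_eq_iterate,
      iterate_deriv_three_quadratic, Pi.zero_apply]

lemma forall_pos_quadratic_eq_zero_iff (a b c : ℝ) :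
    (∀ z : ℝ, 0 < z → a + b * z + c * z ^ 2 = 0) ↔ a = 0 ∧ b = 0 ∧ c = 0 := by
  constructor
  · intro h
    have h₁ := h 1 one_pos
    have h₂ := h 2 two_pos
    have h₃ := h 3 three_pos
    refine ⟨?_, ?_, ?_⟩ <;> linarith
  · rintro ⟨rfl, rfl, rfl⟩ z -
    ring

lemma Continuous.eq_zero_of_forall_mul_eq_zero {g : ℝ → ℝ} (hg : Continuous g)
    (h : ∀ s, s * g s = 0) : g = 0 :=
  hg.ext_on (dense_compl_singleton 0) continuous_const fun s hs =>
    (mul_eq_zero.1 (h s)).resolve_left hs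

lemma eq_deriv_zero_mul_of_forall_mul_deriv_eq {f : ℝ → ℝ} (hf : ContDiff ℝ 2 f)
    (h : ∀ s, s * deriv f s = f s) (s : ℝ) : f s = deriv f 0 * s := by
  have hf' : ContDiff ℝ 1 (deriv f) := hf.iterate_deriv' 1 1
  have hdiff : Differentiable ℝ (deriv f) := hf'.differentiable one_ne_zero
  have hmul : ∀ s, s * deriv (deriv f) s = 0 := by
    intro s
    have hprod := (hasDerivAt_id' s).fun_mul (hdiff s).hasDerivAt
    rw [show (fun s => s * deriv f s) = f from funext h] at hprod
    linarith [hprod.deriv]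
  have hconst : ∀ s, deriv f s = deriv f 0 :=
    fun s => is_const_of_deriv_eq_zero hdiff
      (congrFun ((hf'.continuous_deriv le_rfl).eq_zero_of_forall_mul_eq_zero hmul)) s 0
  rw [← h s, hconst s, mul_comm]

lemma eq_add_mul_sq_of_forall_deriv_eq {f : ℝ → ℝ} (hf : Differentiable ℝ f) {k : ℝ}
    (h : ∀ s, deriv f s = k * s) (s : ℝ) : f s = f 0 + k / 2 * s ^ 2 := by
  have hconst := is_const_of_deriv_eq_zero (f := fun s => f s - k / 2 * s ^ 2)
    (hf.sub (by fun_prop)) (fun s => by simp (disch := fun_prop) [h]; ring) s 0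
  linarith

lemma mul_Psi_of_eq_div_add_add_mul {Θ : ℝ → ℝ → ℝ} {p q r : ℝ → ℝ}
    (hp : Differentiable ℝ p) (hq : Differentiable ℝ q) (hr : Differentiable ℝ r)
    (hΘ : ∀ s z, 0 < z → Θ s z = p s / z + q s + r s * z) {s z : ℝ} (hz : 0 < z) :
    z * Psi Θ s z =
      -((s * deriv p s - p s) + s * deriv q s * z + (s * deriv r s + r s) * z ^ 2) := by
  have hΘs : deriv (fun s' => Θ s' z) s = deriv p s / z + deriv q s + deriv r s * z := by
    rw [show (fun s' => Θ s' z) = fun s' => p s' / z + q s' + r s' * z from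
      funext fun s' => hΘ s' z hz]
    exact ((((hp s).hasDerivAt.div_const z).add (hq s).hasDerivAt).add
      ((hr s).hasDerivAt.mul_const z)).deriv
  have hΘz : deriv (fun z' => Θ s z') z = -p s / z ^ 2 + r s := by
    have hev : (fun z' => Θ s z') =ᶠ[𝓝 z] fun z' => p s / z' + q s + r s * z' :=
      eventually_of_mem (Ioi_mem_nhds hz) fun z' hz' => hΘ s z' hz'
    rw [hev.deriv_eq]
    simp (disch := fun_prop (disch := positivity))
  simp only [Psi, hΘs, hΘz]
  field_simp
  ring

section QuadraticInSnd

variable {U : ℝ → ℝ → ℝ} {A B C : ℝ → ℝ}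

lemma forall_mul_Psi_deriv_fst_div_eq_zero_iff (hA : ContDiff ℝ 2 A) (hB : ContDiff ℝ 2 B)
    (hC : ContDiff ℝ 2 C) (hU : ∀ s z, 0 < z → U s z = A s + B s * z + C s * z ^ 2) :
    (∀ s z : ℝ, 0 < z → z * Psi (fun s z => deriv (fun s' => U s' z) s / z) s z = 0) ↔
      ∀ s, s * deriv (deriv A) s = deriv A s ∧ s * deriv (deriv B) s = 0 ∧
        s * deriv (deriv C) s + deriv C s = 0 := by
  have hd : ∀ {f : ℝ → ℝ}, ContDiff ℝ 2 f → Differentiable ℝ (deriv f) :=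
    fun hf => (hf.iterate_deriv' 1 1).differentiable one_ne_zero
  have hΘ : ∀ s z, 0 < z →
      deriv (fun s' => U s' z) s / z = deriv A s / z + deriv B s + deriv C s * z := by
    intro s z hz
    rw [show (fun s' => U s' z) = fun s' => A s' + B s' * z + C s' * z ^ 2 from
      funext fun s' => hU s' z hz]
    have hA₁ : Differentiable ℝ A := hA.differentiable two_ne_zero
    have hB₁ : Differentiable ℝ B := hB.differentiable two_ne_zero
    have hC₁ : Differentiable ℝ C := hC.differentiable two_ne_zero
    simp (disch := fun_prop)
    field_simp
  have key := fun s z (hz : 0 < z) =>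
    mul_Psi_of_eq_div_add_add_mul (hd hA) (hd hB) (hd hC) hΘ (s := s) hz
  constructor
  · intro h s
    have := (forall_pos_quadratic_eq_zero_iff _ _ _).1 fun z hz => by
      rw [← neg_eq_zero, ← key s z hz, h s z hz]
    refine ⟨?_, ?_, ?_⟩ <;> linarith [this.1, this.2.1, this.2.2]
  · intro h s z hz
    rw [key s z hz, neg_eq_zero]
    exact (forall_pos_quadratic_eq_zero_iff _ _ _).2
      ⟨by linarith [(h s).1], (h s).2.1, (h s).2.2⟩ z hz

lemma forall_mul_Psi_deriv_snd_div_eq_zero_iff (hB : Differentiable ℝ B)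
    (hC : Differentiable ℝ C) (hU : ∀ s z, 0 < z → U s z = A s + B s * z + C s * z ^ 2) :
    (∀ s z : ℝ, 0 < z → z * Psi (fun s z => deriv (fun z' => U s z') z / z) s z = 0) ↔
      ∀ s, s * deriv B s = B s ∧ s * deriv C s = 0 := by
  have hΘ : ∀ s z, 0 < z →
      deriv (fun z' => U s z') z / z = B s / z + (fun s => 2 * C s) s + (fun _ => 0) s * z := by
    intro s z hz
    have hev : (fun z' => U s z') =ᶠ[𝓝 z] fun z' => A s + B s * z' + C s * z' ^ 2 :=
      eventually_of_mem (Ioi_mem_nhds hz) fun z' hz' => hU s z' hz'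
    rw [hev.deriv_eq, deriv_quadratic]
    field_simp
    ring
  have key := fun s z (hz : 0 < z) =>
    mul_Psi_of_eq_div_add_add_mul hB (hC.const_mul 2) (differentiable_const 0) hΘ (s := s) hz
  simp only [deriv_const_mul_field', deriv_const', mul_zero, add_zero, zero_mul] at key
  constructor
  · intro h s
    have := (forall_pos_quadratic_eq_zero_iff (s * deriv B s - B s) (s * (2 * deriv C s)) 0).1
      fun z hz => by linear_combination key s z hz - h s z hz
    exact ⟨by linarith [this.1], by linarith [this.2.1]⟩
  · intro h s z hz
    rw [key s z hz]
    linear_combination -(h s).1 - 2 * z * (h s).2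

end QuadraticInSnd

lemma contDiff_apply_of_contDiffOn_uncurry {n : WithTop ℕ∞} {U : ℝ → ℝ → ℝ}
    (hU : ContDiffOn ℝ n (Function.uncurry U) {p : ℝ × ℝ | 0 < p.2}) {z : ℝ} (hz : 0 < z) :
    ContDiff ℝ n (fun s => U s z) := by
  rw [← contDiffOn_univ]
  exact hU.comp (by fun_prop : ContDiff ℝ n fun s : ℝ => (s, z)).contDiffOn fun _ _ => hz

lemma contDiffOn_Ioi_of_contDiffOn_uncurry {n : WithTop ℕ∞} {U : ℝ → ℝ → ℝ}
    (hU : ContDiffOn ℝ n (Function.uncurry U) {p : ℝ × ℝ | 0 < p.2}) (s : ℝ) :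
    ContDiffOn ℝ n (U s) (Ioi 0) :=
  hU.comp (by fun_prop : ContDiff ℝ n fun z : ℝ => (s, z)).contDiffOn fun _ hz => hz

theorem exists_contDiff_quadratic_in_snd {U : ℝ → ℝ → ℝ}
    (hU : ContDiffOn ℝ 3 (Function.uncurry U) {p : ℝ × ℝ | 0 < p.2})
    (h : ∀ s z : ℝ, 0 < z → deriv^[3] (U s) z = 0) :
    ∃ A B C : ℝ → ℝ, ContDiff ℝ 3 A ∧ ContDiff ℝ 3 B ∧ ContDiff ℝ 3 C ∧
      ∀ s z, 0 < z → U s z = A s + B s * z + C s * z ^ 2 := by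
  have h₁ := contDiff_apply_of_contDiffOn_uncurry hU one_pos
  have h₂ := contDiff_apply_of_contDiffOn_uncurry hU two_pos
  have h₃ := contDiff_apply_of_contDiffOn_uncurry hU three_pos
  -- Lagrange interpolation through the nodes `z = 1, 2, 3`.
  refine ⟨fun s => 3 * U s 1 - 3 * U s 2 + U s 3, fun s => (-5 * U s 1 + 8 * U s 2 - 3 * U s 3) / 2,
    fun s => (U s 1 - 2 * U s 2 + U s 3) / 2, by fun_prop, by fun_prop, by fun_prop, ?_⟩
  intro s z hz
  obtain ⟨a, b, c, hquad⟩ := (isOpen_Ioi.forall_iterate_deriv_three_eq_zero_iff isPreconnected_Ioi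
    (contDiffOn_Ioi_of_contDiffOn_uncurry hU s)).1 (h s)
  simp only [hquad z hz, hquad 1 (by norm_num), hquad 2 (by norm_num), hquad 3 (by norm_num)]
  ring

theorem stmt_13 (U : ℝ → ℝ → ℝ)
    (hU : ContDiffOn ℝ 3 (Function.uncurry U) {p : ℝ × ℝ | 0 < p.2}) :
    ((∀ s z : ℝ, 0 < z →
        z * Psi (fun s z => deriv (fun s' => U s' z) s / z) s z = 0) ∧
      (∀ s z : ℝ, 0 < z →
        z * Psi (fun s z => deriv (fun z' => U s z') z / z) s z = 0) ∧
      (∀ s z : ℝ, 0 < z → deriv^[3] (U s) z = 0)) ↔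
      ∃ g₁ g₂ g₃ g₄ : ℝ, ∀ s z : ℝ, 0 < z →
        U s z = g₁ * s ^ 2 / 2 + g₂ * s * z + g₃ * z ^ 2 / 2 + g₄ := by
  constructor
  · rintro ⟨h₁, h₂, h₃⟩
    obtain ⟨A, B, C, hA, hB, hC, hABC⟩ := exists_contDiff_quadratic_in_snd hU h₃
    have hA' := (forall_mul_Psi_deriv_fst_div_eq_zero_iff (hA.of_le (by norm_num))
      (hB.of_le (by norm_num)) (hC.of_le (by norm_num)) hABC).1 h₁
    have hBC' := (forall_mul_Psi_deriv_snd_div_eq_zero_iff (hB.differentiable (by norm_num))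
      (hC.differentiable (by norm_num)) hABC).1 h₂
    have hA_eq := eq_add_mul_sq_of_forall_deriv_eq (hA.differentiable (by norm_num))
      (eq_deriv_zero_mul_of_forall_mul_deriv_eq (hA.iterate_deriv' 2 1) fun s => (hA' s).1)
    have hB_eq := eq_deriv_zero_mul_of_forall_mul_deriv_eq (hB.of_le (by norm_num))
      fun s => (hBC' s).1
    have hC_eq s := is_const_of_deriv_eq_zero (hC.differentiable (by norm_num))
      (congrFun ((hC.continuous_deriv (by norm_num)).eq_zero_of_forall_mul_eq_zero
        fun s => (hBC' s).2)) s 0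
    refine ⟨deriv (deriv A) 0, deriv B 0, 2 * C 0, A 0, fun s z hz => ?_⟩
    rw [hABC s z hz, hA_eq, hB_eq, hC_eq]
    ring
  · rintro ⟨g₁, g₂, g₃, g₄, hg⟩
    have hABC : ∀ s z, 0 < z →
        U s z = (g₁ / 2 * s ^ 2 + g₄) + g₂ * s * z + g₃ / 2 * z ^ 2 := fun s z hz => by
      rw [hg s z hz]
      ring
    refine ⟨(forall_mul_Psi_deriv_fst_div_eq_zero_iff (by fun_prop) (by fun_prop) (by fun_prop)
      hABC).2 fun s => ?_, (forall_mul_Psi_deriv_snd_div_eq_zero_iff (by fun_prop) (by fun_prop)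
      hABC).2 fun s => ?_, fun s => (isOpen_Ioi.forall_iterate_deriv_three_eq_zero_iff
      isPreconnected_Ioi (contDiffOn_Ioi_of_contDiffOn_uncurry hU s)).2
      ⟨g₄ + g₁ / 2 * s ^ 2, g₂ * s, g₃ / 2, fun z hz => by rw [hABC s z hz]; ring⟩⟩
    · simp (disch := fun_prop)
      ring
    · simp [mul_comm]
end

section
/- Let a, b ∈ ℝ with a ≠ 0, and let J ⊆ ℝ be an open interval on which a − b·z² > 0. If φ : J → ℝ is twice differentiable and satisfies (a − b·z²)·φ''(z) + b·(φ(z) − z·φ'(z)) = 0 for all z ∈ J, then there exist constants C₁, C₂ ∈ ℝ such that φ(z) = C₁·√(a − b·z²) + C₂·z for all z ∈ J. (This is Case I in the proof of Theorem 4.1: any such φ is of Randers type.) -/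
/-!
With `u = √(a - b z²)`, both `z` and `u` solve the linear equation
`(a - b z²) y'' - b z y' + b y = 0` satisfied by `φ`, and `u' / u = -b z / (a - b z²)` is the
integrating factor of Abel's identity for it. Hence `u · W(z, φ)` and `u · W(u, φ)` are constant,
and since `u · W(z, u) = -(u² + b z²) = -a ≠ 0` these two first-order relations can be solved
for `φ` as a linear combination of `u` and `z`.
-/

open Real

def SolvesLinearODE (J : Set ℝ) (p q r f f' f'' : ℝ → ℝ) : Prop :=
  ∀ z ∈ J, HasDerivAt f (f' z) z ∧ HasDerivAt f' (f'' z) z ∧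
    p z * f'' z + q z * f' z + r z * f z = 0

/-- Abel's identity. -/
theorem SolvesLinearODE.exists_mul_wronskian_eq_const {J : Set ℝ} (hJ : IsOpen J)
    (hJc : Convex ℝ J) {p q r f f' f'' g g' g'' m : ℝ → ℝ}
    (hf : SolvesLinearODE J p q r f f' f'') (hg : SolvesLinearODE J p q r g g' g'')
    (hp : ∀ z ∈ J, p z ≠ 0) (hm : ∀ z ∈ J, HasDerivAt m (q z / p z * m z) z) :
    ∃ C, ∀ z ∈ J, m z * (f z * g' z - f' z * g z) = C := by
  have hderiv : ∀ z ∈ J, HasDerivAt (fun z => m z * (f z * g' z - f' z * g z)) 0 z := by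
    intro z hz
    obtain ⟨hf₁, hf₂, hfODE⟩ := hf z hz
    obtain ⟨hg₁, hg₂, hgODE⟩ := hg z hz
    refine ((hm z hz).mul ((hf₁.mul hg₂).sub (hf₂.mul hg₁))).congr_deriv ?_
    simp only [Pi.sub_apply, Pi.mul_apply]
    field_simp [hp z hz]
    linear_combination m z * (f z * hgODE - g z * hfODE)
  exact hJ.exists_is_const_of_deriv_eq_zero hJc.isPreconnected
    (fun z hz => (hderiv z hz).differentiableAt.differentiableWithinAt)
    (fun z hz => (hderiv z hz).deriv)

theorem hasDerivAt_sqrt_sub_mul_sq (a b : ℝ) {z : ℝ} (hz : 0 < a - b * z ^ 2) :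
    HasDerivAt (fun z => √(a - b * z ^ 2)) (-(b * z) / √(a - b * z ^ 2)) z := by
  have hinner : HasDerivAt (fun z => a - b * z ^ 2) (-(b * (2 * z))) z := by
    simpa using ((hasDerivAt_pow 2 z).const_mul b).const_sub a
  convert hinner.sqrt hz.ne' using 1
  field_simp

theorem hasDerivAt_sqrt_sub_mul_sq' (a b : ℝ) {z : ℝ} (hz : 0 < a - b * z ^ 2) :
    HasDerivAt (fun z => √(a - b * z ^ 2))
      (-(b * z) / (a - b * z ^ 2) * √(a - b * z ^ 2)) z := by
  refine (hasDerivAt_sqrt_sub_mul_sq a b hz).congr_deriv ?_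
  have hu_ne : √(a - b * z ^ 2) ≠ 0 := (sqrt_pos.2 hz).ne'
  have hu_sq : √(a - b * z ^ 2) ^ 2 = a - b * z ^ 2 := sq_sqrt hz.le
  set u := √(a - b * z ^ 2)
  rw [← hu_sq]
  field_simp

theorem solvesLinearODE_sqrt (a b : ℝ) {J : Set ℝ} (hpos : ∀ z ∈ J, 0 < a - b * z ^ 2) :
    SolvesLinearODE J (fun z => a - b * z ^ 2) (fun z => -(b * z)) (fun _ => b)
      (fun z => √(a - b * z ^ 2)) (fun z => -(b * z) / √(a - b * z ^ 2))
      (fun z => -(a * b) / √(a - b * z ^ 2) ^ 3) := by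
  intro z hz
  have hu := hasDerivAt_sqrt_sub_mul_sq a b (hpos z hz)
  have hu_ne : √(a - b * z ^ 2) ≠ 0 := (sqrt_pos.2 (hpos z hz)).ne'
  have hu_sq : √(a - b * z ^ 2) ^ 2 = a - b * z ^ 2 := sq_sqrt (hpos z hz).le
  refine ⟨hu, ((((hasDerivAt_id z).const_mul b).neg).div hu hu_ne).congr_deriv ?_, ?_⟩
  · simp only [Pi.neg_apply, id]
    set u := √(a - b * z ^ 2)
    field_simp
    linear_combination (-b) * hu_sq
  · dsimp only
    set u := √(a - b * z ^ 2)
    rw [← hu_sq]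
    field_simp
    linear_combination b * hu_sq

theorem solvesLinearODE_id (a b : ℝ) (J : Set ℝ) :
    SolvesLinearODE J (fun z => a - b * z ^ 2) (fun z => -(b * z)) (fun _ => b)
      id (fun _ => 1) (fun _ => 0) :=
  fun z _ => ⟨hasDerivAt_id z, hasDerivAt_const z 1, by simp⟩

theorem stmt_15 (a b : ℝ) (ha : a ≠ 0)
    (J : Set ℝ) (hJopen : IsOpen J) (hJinterval : Convex ℝ J)
    (hpos : ∀ z ∈ J, 0 < a - b * z ^ 2)
    (φ : ℝ → ℝ)
    (hφ : ∀ z ∈ J, DifferentiableAt ℝ φ z)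
    (hφ' : ∀ z ∈ J, DifferentiableAt ℝ (deriv φ) z)
    (hODE : ∀ z ∈ J,
      (a - b * z ^ 2) * deriv (deriv φ) z + b * (φ z - z * deriv φ z) = 0) :
    ∃ C₁ C₂ : ℝ, ∀ z ∈ J, φ z = C₁ * Real.sqrt (a - b * z ^ 2) + C₂ * z := by
  have hsol : SolvesLinearODE J (fun z => a - b * z ^ 2) (fun z => -(b * z)) (fun _ => b)
      φ (deriv φ) (deriv (deriv φ)) := fun z hz =>
    ⟨(hφ z hz).hasDerivAt, (hφ' z hz).hasDerivAt, by linear_combination hODE z hz⟩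
  have hp : ∀ z ∈ J, a - b * z ^ 2 ≠ 0 := fun z hz => (hpos z hz).ne'
  have hm := fun z hz => hasDerivAt_sqrt_sub_mul_sq' a b (hpos z hz)
  obtain ⟨C₁, hC₁⟩ := (solvesLinearODE_id a b J).exists_mul_wronskian_eq_const hJopen
    hJinterval hsol hp hm
  obtain ⟨C₂, hC₂⟩ := (solvesLinearODE_sqrt a b hpos).exists_mul_wronskian_eq_const
    hJopen hJinterval hsol hp hm
  refine ⟨-C₁ / a, C₂ / a, fun z hz => ?_⟩
  have hu_ne : √(a - b * z ^ 2) ≠ 0 := (sqrt_pos.2 (hpos z hz)).ne'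
  have hu_sq : √(a - b * z ^ 2) ^ 2 = a - b * z ^ 2 := sq_sqrt (hpos z hz).le
  have h₁ := hC₁ z hz
  have h₂ := hC₂ z hz
  simp only [id] at h₁
  set u := √(a - b * z ^ 2)
  field_simp at h₂
  have key : a * φ z = C₂ * z - C₁ * u := by
    linear_combination (-u) * h₁ + z * h₂ - φ z * hu_sq
  field_simp
  linear_combination key
end

section
/- Let a, b, c ∈ ℝ with a ≠ 0 and Δ := −b² − 2·a·c > 0. Then a·z² + 2·b·z − 2·c ≠ 0 for every z ∈ ℝ. Moreover, set ζ(z) := z + b/a, α := √Δ/a, β := b/√Δ. A positive differentiable function φ : ℝ → ℝ satisfies (a·z² + 2·b·z − 2·c)·φ'(z) = (a·z + 2·b)·φ(z) for all z ∈ ℝ if and only if there exists a constant k > 0 such that φ(z) = k·√(ζ(z)² + α²)·exp(β·arctan(ζ(z)/α)) for all z ∈ ℝ. (This is the integration step in Case 2.2 of the proof of Theorem 1.1, producing the Landsberg non-Berwald metrics of equation (1.3).) -/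
/-!
Completing the square, `a z² + 2 b z - 2 c = a ((z + b/a)² + α²)` with `α = √Δ / a`, so the
quadratic has no real zero and the equation is the linear ODE `φ' = g φ` with
`g = (a z + 2 b) / (a z² + 2 b z - 2 c)`. In the variable `ζ = z + b/a` one has
`g = (ζ + β α) / (ζ² + α²)`, the logarithmic derivative of `√(ζ² + α²) · exp (β arctan (ζ/α))`.
Positive solutions of a linear ODE are the positive multiples of one of them, since the quotient
of two solutions has zero derivative.
-/

open Real

lemma quadratic_eq_mul_sq_add_sq {a b c : ℝ} (ha : a ≠ 0) (hΔ : 0 ≤ -b ^ 2 - 2 * a * c) (z : ℝ) :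
    a * z ^ 2 + 2 * b * z - 2 * c = a * ((z + b / a) ^ 2 + (√(-b ^ 2 - 2 * a * c) / a) ^ 2) := by
  rw [div_pow, sq_sqrt hΔ]
  field_simp
  ring

section LinearODE

variable {g ψ φ : ℝ → ℝ}

lemma eq_mul_of_deriv_eq_mul (hψ : ∀ z, HasDerivAt ψ (g z * ψ z) z) (hψ0 : ∀ z, ψ z ≠ 0)
    (hφ : Differentiable ℝ φ) (hφ' : ∀ z, deriv φ z = g z * φ z) (z : ℝ) :
    φ z = φ 0 / ψ 0 * ψ z := by
  have hquot : ∀ z, HasDerivAt (fun z => φ z / ψ z) 0 z := fun z => by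
    refine ((hφ z).hasDerivAt.div (hψ z) (hψ0 z)).congr_deriv ?_
    rw [hφ' z]
    ring
  have hconst := is_const_of_deriv_eq_zero (fun z => (hquot z).differentiableAt)
    (fun z => (hquot z).deriv) z 0
  field_simp [hψ0 z, hψ0 0] at hconst ⊢
  linear_combination hconst

lemma deriv_eq_mul_iff_exists_eq_mul (hψ : ∀ z, HasDerivAt ψ (g z * ψ z) z)
    (hψ0 : ∀ z, ψ z ≠ 0) (hφ : Differentiable ℝ φ) :
    (∀ z, deriv φ z = g z * φ z) ↔ ∃ k, ∀ z, φ z = k * ψ z := by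
  refine ⟨fun hφ' => ⟨φ 0 / ψ 0, eq_mul_of_deriv_eq_mul hψ hψ0 hφ hφ'⟩, ?_⟩
  rintro ⟨k, hk⟩ z
  have hφk : φ = fun z => k * ψ z := funext hk
  rw [hφk, ((hψ z).const_mul k).deriv]
  ring

end LinearODE

noncomputable def landsbergProfile (α β ζ : ℝ) : ℝ :=
  √(ζ ^ 2 + α ^ 2) * exp (β * arctan (ζ / α))

section LandsbergProfile

variable {α : ℝ} (β : ℝ)

lemma landsbergProfile_pos (hα : α ≠ 0) (ζ : ℝ) : 0 < landsbergProfile α β ζ := by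
  unfold landsbergProfile
  positivity

lemma hasDerivAt_landsbergProfile (hα : α ≠ 0) (ζ : ℝ) :
    HasDerivAt (landsbergProfile α β)
      ((ζ + β * α) / (ζ ^ 2 + α ^ 2) * landsbergProfile α β ζ) ζ := by
  have hS : 0 < ζ ^ 2 + α ^ 2 := by positivity
  have hsqrt : HasDerivAt (fun ζ => √(ζ ^ 2 + α ^ 2)) (2 * ζ / (2 * √(ζ ^ 2 + α ^ 2))) ζ := by
    simpa using ((hasDerivAt_pow 2 ζ).add_const (α ^ 2)).sqrt hS.ne'
  have hexp : HasDerivAt (fun ζ => exp (β * arctan (ζ / α)))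
      (exp (β * arctan (ζ / α)) * (β * (1 / (1 + (ζ / α) ^ 2) * (1 / α)))) ζ := by
    simpa only [mul_one_div] using
      ((((hasDerivAt_id' ζ).div_const α).arctan).const_mul β).exp
  refine (hsqrt.mul hexp).congr_deriv ?_
  have hs : √(ζ ^ 2 + α ^ 2) ^ 2 = ζ ^ 2 + α ^ 2 := sq_sqrt hS.le
  unfold landsbergProfile
  field_simp
  rw [hs]
  ring

end LandsbergProfile

theorem stmt_17 (a b c : ℝ) (ha : a ≠ 0) (hΔ : 0 < -b ^ 2 - 2 * a * c)
    (φ : ℝ → ℝ) (hφpos : ∀ z : ℝ, 0 < φ z) (hφ : Differentiable ℝ φ) :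
    (∀ z : ℝ, a * z ^ 2 + 2 * b * z - 2 * c ≠ 0) ∧
      ((∀ z : ℝ, (a * z ^ 2 + 2 * b * z - 2 * c) * deriv φ z = (a * z + 2 * b) * φ z) ↔
        ∃ k : ℝ, 0 < k ∧ ∀ z : ℝ,
          φ z = k * Real.sqrt ((z + b / a) ^ 2 + (Real.sqrt (-b ^ 2 - 2 * a * c) / a) ^ 2) *
            Real.exp ((b / Real.sqrt (-b ^ 2 - 2 * a * c)) *
              Real.arctan ((z + b / a) / (Real.sqrt (-b ^ 2 - 2 * a * c) / a)))) := by
  set α := √(-b ^ 2 - 2 * a * c) / a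
  set β := b / √(-b ^ 2 - 2 * a * c)
  have hα : α ≠ 0 := div_ne_zero (sqrt_pos.mpr hΔ).ne' ha
  have hβα : a * (β * α) = b := by
    rw [div_mul_div_cancel₀ (sqrt_pos.mpr hΔ).ne', mul_div_cancel₀ b ha]
  have hQ := quadratic_eq_mul_sq_add_sq ha hΔ.le
  have hQ0 : ∀ z, a * z ^ 2 + 2 * b * z - 2 * c ≠ 0 := fun z => by
    rw [hQ z]
    have : 0 < (z + b / a) ^ 2 + α ^ 2 := by positivity
    exact mul_ne_zero ha this.ne'
  let ψ z := landsbergProfile α β (z + b / a)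
  have hψ : ∀ z, HasDerivAt ψ
      ((a * z + 2 * b) / (a * z ^ 2 + 2 * b * z - 2 * c) * ψ z) z := fun z => by
    refine ((hasDerivAt_landsbergProfile β hα (z + b / a)).comp_add_const z (b / a)).congr_deriv ?_
    have hlin : a * z + 2 * b = a * (z + b / a + β * α) := by
      rw [mul_add, hβα, mul_add, mul_div_cancel₀ b ha]
      ring
    rw [hQ z, hlin, mul_div_mul_left _ _ ha]
  refine ⟨hQ0, ?_⟩
  have hode : (∀ z, (a * z ^ 2 + 2 * b * z - 2 * c) * deriv φ z = (a * z + 2 * b) * φ z) ↔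
      ∀ z, deriv φ z = (a * z + 2 * b) / (a * z ^ 2 + 2 * b * z - 2 * c) * φ z :=
    forall_congr' fun z => by rw [div_mul_eq_mul_div, eq_div_iff (hQ0 z), mul_comm]
  rw [hode, deriv_eq_mul_iff_exists_eq_mul hψ (fun z => (landsbergProfile_pos β hα _).ne') hφ]
  refine exists_congr fun k => ⟨fun hk => ⟨?_, fun z => by rw [hk z, mul_assoc]; rfl⟩,
    fun hk z => by rw [hk.2 z, mul_assoc]; rfl⟩
  exact pos_of_mul_pos_left (hk 0 ▸ hφpos 0) (landsbergProfile_pos β hα _).le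
end

section
/- Let k > 0, α > 0 and β ∈ ℝ with β ≠ 0. Put C := α²·(1 + β²), M(t) := C·t² + 2·α·β·|t| + 1, and define θ : ℝ → ℝ by θ(t) := k·√(M(t))·exp(β·arctan(1/(α·|t|) + β)) for t ≠ 0 and θ(0) := k·exp(β·π/2). Then: (i) θ is twice continuously differentiable on ℝ (in particular θ'(0) = 0, θ''(0) = C·k·exp(β·π/2)); (ii) the one-sided limits of the third derivative at 0 exist and differ, namely lim_{t→0⁺} θ'''(t) = −4·α·β·C·k·exp(β·π/2) and lim_{t→0⁻} θ'''(t) = 4·α·β·C·k·exp(β·π/2); consequently θ is not three times differentiable at 0, so θ is C² but not C³ on ℝ. (This is the Remark after Theorem 1.1 showing that the unicorn metric (1.3) is not regular on TM∖{0}.) -/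
open Filter Set

/-- `M(t) = α²(1+β²)t² + 2αβ|t| + 1`. -/
noncomputable def Mfun (α β t : ℝ) : ℝ :=
  α ^ 2 * (1 + β ^ 2) * t ^ 2 + 2 * α * β * |t| + 1

/-- `θ(t) = k·√(M(t))·exp(β·arctan(1/(α|t|) + β))` for `t ≠ 0`,
with `θ(0) = k·exp(βπ/2)`. -/
noncomputable def thetaFun (k α β : ℝ) : ℝ → ℝ := fun t =>
  if t = 0 then k * Real.exp (β * Real.pi / 2)
  else k * Real.sqrt (Mfun α β t) * Real.exp (β * Real.arctan (1 / (α * |t|) + β))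

/-!
Write `θ = k·√M·exp(β·φ)` with `φ(t) = arctan(1/(α|t|) + β)`, extended by `φ(0) = π/2`, which
makes `φ` continuous. Away from `0` we have `φ' = -α·sgn t / M` and `M' = 2Ct + 2αβ·sgn t`, so the
sign terms cancel in `θ' = kCt·e^{βφ}/√M` and `θ'' = kC·e^{βφ}/M^{3/2}`; both extend continuously
to `0`, hence are the derivatives there as well. The third derivative
`kC·e^{βφ}(-4αβ·sgn t - 3Ct)/M^{5/2}` keeps a sign term, so its one-sided limits at `0` are
`∓4αβCk·e^{βπ/2}`, which differ since `β ≠ 0`; a function whose derivative has distinct one-sided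
limits at a point is not differentiable there.
-/

open Real Topology

theorem not_differentiableAt_of_tendsto_deriv {E : Type*} [NormedAddCommGroup E]
    [NormedSpace ℝ E] {f : ℝ → E} {x : ℝ} {a b : E}
    (hf : ∀ᶠ y in 𝓝[≠] x, DifferentiableAt ℝ f y)
    (ha : Tendsto (deriv f) (𝓝[>] x) (𝓝 a)) (hb : Tendsto (deriv f) (𝓝[<] x) (𝓝 b))
    (hab : a ≠ b) : ¬ DifferentiableAt ℝ f x := by
  intro hd
  have hdiff : DifferentiableOn ℝ f {y | DifferentiableAt ℝ f y} :=
    fun _ hy => hy.differentiableWithinAt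
  have hR : HasDerivWithinAt f a (Ici x) x :=
    hasDerivWithinAt_Ici_of_tendsto_deriv hdiff hd.continuousAt.continuousWithinAt
      (nhdsWithin_mono _ (fun _ hy => ne_of_gt hy) hf) ha
  have hL : HasDerivWithinAt f b (Iic x) x :=
    hasDerivWithinAt_Iic_of_tendsto_deriv hdiff hd.continuousAt.continuousWithinAt
      (nhdsWithin_mono _ (fun _ hy => ne_of_lt hy) hf) hb
  refine hab ?_
  calc a = deriv f x := (uniqueDiffWithinAt_Ici x).eq_deriv _ hR hd.hasDerivAt.hasDerivWithinAt
    _ = b := (uniqueDiffWithinAt_Iic x).eq_deriv _ hd.hasDerivAt.hasDerivWithinAt hL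

theorem contDiff_two_of_hasDerivAt {𝕜 F : Type*} [NontriviallyNormedField 𝕜]
    [NormedAddCommGroup F] [NormedSpace 𝕜 F] {f f₁ f₂ : 𝕜 → F} (h₁ : ∀ x, HasDerivAt f (f₁ x) x)
    (h₂ : ∀ x, HasDerivAt f₁ (f₂ x) x) (hc : Continuous f₂) : ContDiff 𝕜 2 f := by
  have hd₁ : deriv f = f₁ := funext fun x => (h₁ x).deriv
  have hd₂ : deriv f₁ = f₂ := funext fun x => (h₂ x).deriv
  rw [show (2 : WithTop ℕ∞) = 1 + 1 by norm_num, contDiff_succ_iff_deriv, hd₁,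
    contDiff_one_iff_deriv, hd₂]
  exact ⟨fun x => (h₁ x).differentiableAt, by simp, fun x => (h₂ x).differentiableAt, hc⟩

noncomputable def phase (α β t : ℝ) : ℝ :=
  if t = 0 then π / 2 else arctan (1 / (α * |t|) + β)

noncomputable def thetaDeriv1 (k α β t : ℝ) : ℝ :=
  k * (α ^ 2 * (1 + β ^ 2)) * t * exp (β * phase α β t) / √(Mfun α β t)

noncomputable def thetaDeriv2 (k α β t : ℝ) : ℝ :=
  k * (α ^ 2 * (1 + β ^ 2)) * exp (β * phase α β t) / (Mfun α β t * √(Mfun α β t))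

noncomputable def thetaDeriv3 (k α β t : ℝ) : ℝ :=
  k * (α ^ 2 * (1 + β ^ 2)) * exp (β * phase α β t)
    * (-4 * α * β * SignType.sign t - 3 * (α ^ 2 * (1 + β ^ 2)) * t)
    / (Mfun α β t ^ 2 * √(Mfun α β t))

section

variable {k α β : ℝ}

theorem Mfun_zero : Mfun α β 0 = 1 := by simp [Mfun]

theorem Mfun_pos (hα : 0 < α) (t : ℝ) : 0 < Mfun α β t := by
  have h : Mfun α β t = α ^ 2 * t ^ 2 + (α * β * |t| + 1) ^ 2 := by
    rw [Mfun, ← sq_abs t]; ring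
  rcases eq_or_ne t 0 with rfl | ht
  · simp [Mfun_zero]
  · rw [h]; positivity

theorem continuous_Mfun : Continuous (Mfun α β) := by
  unfold Mfun; fun_prop

theorem hasDerivAt_Mfun {t : ℝ} (ht : t ≠ 0) :
    HasDerivAt (Mfun α β) (2 * (α ^ 2 * (1 + β ^ 2)) * t + 2 * α * β * SignType.sign t) t := by
  have h : HasDerivAt (fun x => α ^ 2 * (1 + β ^ 2) * x ^ 2 + 2 * α * β * |x| + 1)
      (α ^ 2 * (1 + β ^ 2) * (2 * t ^ 1) + 2 * α * β * SignType.sign t) t :=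
    (((hasDerivAt_pow 2 t).const_mul _).add ((hasDerivAt_abs ht).const_mul _)).add_const 1
  exact h.congr_deriv (by ring)

theorem phase_zero : phase α β 0 = π / 2 := if_pos rfl

theorem phase_eventuallyEq {t : ℝ} (ht : t ≠ 0) :
    phase α β =ᶠ[𝓝 t] fun x => arctan (1 / (α * |x|) + β) := by
  filter_upwards [isOpen_ne.mem_nhds ht] with x hx
  exact if_neg hx

theorem hasDerivAt_phase (hα : 0 < α) {t : ℝ} (ht : t ≠ 0) :
    HasDerivAt (phase α β) (-α * SignType.sign t / Mfun α β t) t := by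
  have hat : α * |t| ≠ 0 := by positivity
  have h : HasDerivAt (fun x => arctan (1 / (α * |x|) + β))
      (1 / (1 + (1 / (α * |t|) + β) ^ 2) * (-(α * SignType.sign t) / (α * |t|) ^ 2)) t := by
    simpa only [one_div, Pi.inv_apply] using
      ((((hasDerivAt_abs ht).const_mul α).inv hat).add_const β).arctan
  have hsq : 1 + (1 / (α * |t|) + β) ^ 2 = Mfun α β t / (α * |t|) ^ 2 := by
    field_simp
    rw [Mfun, ← sq_abs t]; ring
  refine (h.congr_deriv ?_).congr_of_eventuallyEq (phase_eventuallyEq ht)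
  have := (Mfun_pos (β := β) hα t).ne'
  rw [hsq]
  field_simp

theorem tendsto_phase_zero (hα : 0 < α) : Tendsto (phase α β) (𝓝[≠] 0) (𝓝 (π / 2)) := by
  have hscale : Tendsto (fun x => α * |x|) (𝓝[≠] 0) (𝓝[>] 0) := by
    refine tendsto_nhdsWithin_iff.2 ⟨?_, ?_⟩
    · have : Continuous fun x : ℝ => α * |x| := by fun_prop
      simpa using (this.tendsto 0).mono_left nhdsWithin_le_nhds
    · filter_upwards [self_mem_nhdsWithin] with x hx
      exact mul_pos hα (abs_pos.2 hx)
  have hinner : Tendsto (fun x => 1 / (α * |x|) + β) (𝓝[≠] 0) atTop := by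
    simpa only [one_div, Function.comp_def] using
      tendsto_atTop_add_const_right _ β (tendsto_inv_nhdsGT_zero.comp hscale)
  refine ((tendsto_arctan_atTop.mono_right nhdsWithin_le_nhds).comp hinner).congr' ?_
  filter_upwards [self_mem_nhdsWithin] with x hx
  exact (if_neg hx).symm

theorem continuous_phase (hα : 0 < α) : Continuous (phase α β) := by
  refine continuous_iff_continuousAt.2 fun t => ?_
  rcases eq_or_ne t 0 with rfl | ht
  · refine continuousWithinAt_compl_self.1 ?_
    simpa only [ContinuousWithinAt, phase_zero] using tendsto_phase_zero hα
  · exact (hasDerivAt_phase hα ht).continuousAt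

theorem thetaFun_eq : thetaFun k α β = fun t => k * √(Mfun α β t) * exp (β * phase α β t) := by
  ext t
  rcases eq_or_ne t 0 with rfl | ht
  · simp [thetaFun, phase_zero, Mfun_zero, mul_div_assoc]
  · simp [thetaFun, phase, ht]

theorem hasDerivAt_exp_phase (hα : 0 < α) {t : ℝ} (ht : t ≠ 0) :
    HasDerivAt (fun x => exp (β * phase α β x))
      (exp (β * phase α β t) * (β * (-α * SignType.sign t / Mfun α β t))) t :=
  ((hasDerivAt_phase hα ht).const_mul β).exp

theorem hasDerivAt_sqrt_Mfun (hα : 0 < α) {t : ℝ} (ht : t ≠ 0) :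
    HasDerivAt (fun x => √(Mfun α β x))
      ((2 * (α ^ 2 * (1 + β ^ 2)) * t + 2 * α * β * SignType.sign t) / (2 * √(Mfun α β t))) t :=
  (hasDerivAt_Mfun ht).sqrt (Mfun_pos hα t).ne'

theorem hasDerivAt_thetaFun_of_ne (hα : 0 < α) {t : ℝ} (ht : t ≠ 0) :
    HasDerivAt (thetaFun k α β) (thetaDeriv1 k α β t) t := by
  rw [thetaFun_eq]
  refine (((hasDerivAt_sqrt_Mfun hα ht).const_mul k).mul
    (hasDerivAt_exp_phase hα ht)).congr_deriv ?_
  have hm := Mfun_pos (β := β) hα t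
  have hr : √(Mfun α β t) ^ 2 = Mfun α β t := sq_sqrt hm.le
  have hr0 : √(Mfun α β t) ≠ 0 := (sqrt_pos.2 hm).ne'
  rw [thetaDeriv1]
  generalize √(Mfun α β t) = r at hr hr0
  rw [← hr]
  field_simp
  ring

theorem hasDerivAt_thetaDeriv1_of_ne (hα : 0 < α) {t : ℝ} (ht : t ≠ 0) :
    HasDerivAt (thetaDeriv1 k α β) (thetaDeriv2 k α β t) t := by
  refine ((((hasDerivAt_id t).const_mul (k * (α ^ 2 * (1 + β ^ 2)))).mul
    (hasDerivAt_exp_phase hα ht)).div (hasDerivAt_sqrt_Mfun hα ht)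
    (sqrt_pos.2 (Mfun_pos hα t)).ne').congr_deriv ?_
  have hm := Mfun_pos (β := β) hα t
  have hr : √(Mfun α β t) ^ 2 = Mfun α β t := sq_sqrt hm.le
  have hr0 : √(Mfun α β t) ≠ 0 := (sqrt_pos.2 hm).ne'
  have hM : Mfun α β t = α ^ 2 * (1 + β ^ 2) * t ^ 2 + 2 * α * β * (SignType.sign t * t) + 1 := by
    rw [sign_mul_self]; rfl
  rw [thetaDeriv2]
  generalize √(Mfun α β t) = r at hr hr0
  rw [← hr] at hM ⊢
  simp only [Pi.mul_apply, id]
  field_simp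
  linear_combination k * hM

theorem hasDerivAt_thetaDeriv2_of_ne (hα : 0 < α) {t : ℝ} (ht : t ≠ 0) :
    HasDerivAt (thetaDeriv2 k α β) (thetaDeriv3 k α β t) t := by
  have hm := Mfun_pos (β := β) hα t
  have hr0 : √(Mfun α β t) ≠ 0 := (sqrt_pos.2 hm).ne'
  refine (((hasDerivAt_exp_phase hα ht).const_mul (k * (α ^ 2 * (1 + β ^ 2)))).div
    ((hasDerivAt_Mfun ht).mul (hasDerivAt_sqrt_Mfun hα ht)) (mul_ne_zero hm.ne' hr0)).congr_deriv ?_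
  have hr : √(Mfun α β t) ^ 2 = Mfun α β t := sq_sqrt hm.le
  rw [thetaDeriv3, Pi.mul_apply]
  generalize √(Mfun α β t) = r at hr hr0
  rw [← hr]
  field_simp
  ring

theorem continuous_thetaDeriv1 (hα : 0 < α) : Continuous (thetaDeriv1 k α β) := by
  have := continuous_phase (β := β) hα
  exact Continuous.div (by fun_prop) (continuous_Mfun.sqrt)
    fun t => (sqrt_pos.2 (Mfun_pos hα t)).ne'

theorem continuous_thetaDeriv2 (hα : 0 < α) : Continuous (thetaDeriv2 k α β) := by
  have := continuous_phase (β := β) hα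
  exact Continuous.div (by fun_prop) (continuous_Mfun.mul continuous_Mfun.sqrt)
    fun t => (mul_pos (Mfun_pos hα t) (sqrt_pos.2 (Mfun_pos hα t))).ne'

theorem hasDerivAt_thetaFun (hα : 0 < α) (t : ℝ) :
    HasDerivAt (thetaFun k α β) (thetaDeriv1 k α β t) t := by
  have := continuous_phase (β := β) hα
  have hcont : Continuous (thetaFun k α β) := by
    rw [thetaFun_eq]; exact (continuous_const.mul continuous_Mfun.sqrt).mul (by fun_prop)
  exact hasDerivAt_of_hasDerivAt_of_ne' (fun _ hy => hasDerivAt_thetaFun_of_ne hα hy)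
    hcont.continuousAt (continuous_thetaDeriv1 hα).continuousAt t

theorem hasDerivAt_thetaDeriv1 (hα : 0 < α) (t : ℝ) :
    HasDerivAt (thetaDeriv1 k α β) (thetaDeriv2 k α β t) t :=
  hasDerivAt_of_hasDerivAt_of_ne' (fun _ hy => hasDerivAt_thetaDeriv1_of_ne hα hy)
    (continuous_thetaDeriv1 hα).continuousAt (continuous_thetaDeriv2 hα).continuousAt t

theorem thetaDeriv1_zero : thetaDeriv1 k α β 0 = 0 := by simp [thetaDeriv1]

theorem thetaDeriv2_zero :
    thetaDeriv2 k α β 0 = α ^ 2 * (1 + β ^ 2) * k * exp (β * π / 2) := by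
  simp only [thetaDeriv2, phase_zero, Mfun_zero, sqrt_one]
  ring_nf

theorem tendsto_thetaDeriv3 (hα : 0 < α) {s : Set ℝ} {σ : ℝ}
    (hσ : ∀ t ∈ s, (SignType.sign t : ℝ) = σ) :
    Tendsto (thetaDeriv3 k α β) (𝓝[s] 0)
      (𝓝 (-4 * α * β * σ * (α ^ 2 * (1 + β ^ 2)) * k * exp (β * π / 2))) := by
  have := continuous_phase (β := β) hα
  have hcont : Continuous fun t => k * (α ^ 2 * (1 + β ^ 2)) * exp (β * phase α β t)
      * (-4 * α * β * σ - 3 * (α ^ 2 * (1 + β ^ 2)) * t) / (Mfun α β t ^ 2 * √(Mfun α β t)) :=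
    Continuous.div (by fun_prop) ((continuous_Mfun.pow 2).mul continuous_Mfun.sqrt)
      fun t => (mul_pos (pow_pos (Mfun_pos hα t) 2) (sqrt_pos.2 (Mfun_pos hα t))).ne'
  have hlim := (hcont.tendsto 0).mono_left (nhdsWithin_le_nhds (s := s))
  simp only [phase_zero, Mfun_zero, sqrt_one] at hlim
  refine (hlim.congr' ?_).trans (le_of_eq (by ring_nf))
  filter_upwards [self_mem_nhdsWithin] with t ht
  rw [thetaDeriv3, hσ t ht]

end

theorem stmt_19 (k α β : ℝ) (hk : 0 < k) (hα : 0 < α) (hβ : β ≠ 0) :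
    ContDiff ℝ 2 (thetaFun k α β) ∧
      deriv (thetaFun k α β) 0 = 0 ∧
      deriv (deriv (thetaFun k α β)) 0
        = α ^ 2 * (1 + β ^ 2) * k * Real.exp (β * Real.pi / 2) ∧
      Tendsto (deriv (deriv (deriv (thetaFun k α β)))) (nhdsWithin 0 (Ioi 0))
        (nhds (-4 * α * β * (α ^ 2 * (1 + β ^ 2)) * k * Real.exp (β * Real.pi / 2))) ∧
      Tendsto (deriv (deriv (deriv (thetaFun k α β)))) (nhdsWithin 0 (Iio 0))
        (nhds (4 * α * β * (α ^ 2 * (1 + β ^ 2)) * k * Real.exp (β * Real.pi / 2))) ∧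
      ¬ DifferentiableAt ℝ (deriv (deriv (thetaFun k α β))) 0 ∧
      ¬ ContDiff ℝ 3 (thetaFun k α β) := by
  have hd₁ : deriv (thetaFun k α β) = thetaDeriv1 k α β :=
    funext fun t => (hasDerivAt_thetaFun hα t).deriv
  have hd₂ : deriv (thetaDeriv1 k α β) = thetaDeriv2 k α β :=
    funext fun t => (hasDerivAt_thetaDeriv1 hα t).deriv
  have hd₃ : deriv (thetaDeriv2 k α β) =ᶠ[𝓝[≠] 0] thetaDeriv3 k α β := by
    filter_upwards [self_mem_nhdsWithin] with t ht using (hasDerivAt_thetaDeriv2_of_ne hα ht).deriv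
  have hright : Tendsto (deriv (thetaDeriv2 k α β)) (𝓝[>] 0)
      (𝓝 (-4 * α * β * (α ^ 2 * (1 + β ^ 2)) * k * exp (β * π / 2))) := by
    have := tendsto_thetaDeriv3 (k := k) (β := β) hα (s := Ioi 0) (σ := 1)
      fun t (ht : 0 < t) => by simp [ht]
    rw [mul_one] at this
    exact this.congr' (hd₃.filter_mono (nhdsWithin_mono _ fun _ hy => (mem_Ioi.1 hy).ne')).symm
  have hleft : Tendsto (deriv (thetaDeriv2 k α β)) (𝓝[<] 0)
      (𝓝 (4 * α * β * (α ^ 2 * (1 + β ^ 2)) * k * exp (β * π / 2))) := by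
    have := tendsto_thetaDeriv3 (k := k) (β := β) hα (s := Iio 0) (σ := -1)
      fun t (ht : t < 0) => by simp [ht]
    convert this.congr'
      (hd₃.filter_mono (nhdsWithin_mono _ fun _ hy => (mem_Iio.1 hy).ne)).symm using 2
    ring
  have hnd : ¬ DifferentiableAt ℝ (thetaDeriv2 k α β) 0 := by
    refine not_differentiableAt_of_tendsto_deriv ?_ hright hleft ?_
    · filter_upwards [self_mem_nhdsWithin] with t ht
      exact (hasDerivAt_thetaDeriv2_of_ne hα ht).differentiableAt
    · have : 4 * α * β * (α ^ 2 * (1 + β ^ 2)) * k * exp (β * π / 2) ≠ 0 := by positivity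
      intro h
      exact this (by linarith)
  rw [hd₁, hd₂]
  refine ⟨contDiff_two_of_hasDerivAt (hasDerivAt_thetaFun hα) (hasDerivAt_thetaDeriv1 hα)
    (continuous_thetaDeriv2 hα), thetaDeriv1_zero, thetaDeriv2_zero, hright, hleft, hnd,
    fun h => hnd ?_⟩
  simpa [iteratedDeriv_eq_iterate, hd₁, hd₂] using
    h.differentiable_iteratedDeriv 2 (by norm_num) 0
end
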